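/- Let n, c, r, t, k be natural numbers with k + c ≤ r, k + c ≤ t, and r + t − k ≤ n − c. Then there exist maps φ, ψ : {0,1}^c → {0,1}^n such that for all x, y ∈ {0,1}^c: the Hamming weight |φ(x)| = r, the Hamming weight |ψ(y)| = t, and |φ(x) ∧ ψ(y)| = k + |x ∧ y|, where ∧ denotes bitwise AND. (In particular, since |u ⊕ v| = |u| + |v| − 2|u ∧ v|, we get |φ(x) ⊕ ψ(y)| = r + t − 2(k + |x ∧ y|) for all x, y.) -/

import Mathlib

/-- Hamming weight of a Boolean vector. -/
def hamW {n : ℕ} (x : Fin n → Bool) : ℕ := (Finset.univ.filter (fun i => x i)).card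

/-- Bitwise XOR of Boolean vectors. -/
def bxor {n : ℕ} (x y : Fin n → Bool) : Fin n → Bool := fun i => xor (x i) (y i)

/-- Bitwise AND of Boolean vectors. -/
def band {n : ℕ} (x y : Fin n → Bool) : Fin n → Bool := fun i => x i && y i

/-! The gadget `x ++ ¬x ++ 0^c`, `y ++ 0^c ++ ¬y` gives both sides weight `c` and overlap
exactly `|x ∧ y|`, since `¬x` and `¬y` sit against zeros. The remaining `r - c`, `t - c` and `k`
are supplied by constant padding vectors with overlap `k`, which fit in `n - 3c` coordinates
precisely when `r + t - k ≤ n - c`. All three weights add up under concatenation. -/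

lemma hamW_eq_sum {n : ℕ} (x : Fin n → Bool) : hamW x = ∑ i, (x i).toNat := by
  rw [hamW, Finset.card_filter]
  congr! with i
  cases x i <;> rfl

lemma hamW_le {n : ℕ} (x : Fin n → Bool) : hamW x ≤ n :=
  (Finset.card_filter_le _ _).trans_eq (Finset.card_fin n)

lemma hamW_true (n : ℕ) : hamW (fun _ : Fin n => true) = n := by
  simp [hamW]

lemma hamW_false (n : ℕ) : hamW (fun _ : Fin n => false) = 0 := by
  simp [hamW]

lemma hamW_not {n : ℕ} (x : Fin n → Bool) : hamW (fun i => !x i) = n - hamW x := by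
  have := Finset.card_filter_add_card_filter_not (s := Finset.univ) (fun i : Fin n => x i = true)
  simp only [Finset.card_univ, Fintype.card_fin, Bool.not_eq_true] at this
  simp only [hamW, Bool.not_eq_true']
  omega

lemma hamW_append {m n : ℕ} (u : Fin m → Bool) (v : Fin n → Bool) :
    hamW (Fin.append u v) = hamW u + hamW v := by
  simp only [hamW_eq_sum, Fin.sum_univ_add, Fin.append_left, Fin.append_right]

lemma band_append {m n : ℕ} (u u' : Fin m → Bool) (v v' : Fin n → Bool) :
    band (Fin.append u v) (Fin.append u' v') = Fin.append (band u u') (band v v') := by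
  funext i
  induction i using Fin.addCases <;> simp [band]

lemma band_false_right {n : ℕ} (u : Fin n → Bool) : band u (fun _ => false) = fun _ => false :=
  funext fun i => Bool.and_false (u i)

def HasWeights {n : ℕ} (u v : Fin n → Bool) (a b d : ℕ) : Prop :=
  hamW u = a ∧ hamW v = b ∧ hamW (band u v) = d

namespace HasWeights

lemma append {m n a b d a' b' d' : ℕ} {u v : Fin m → Bool} {u' v' : Fin n → Bool}
    (h : HasWeights u v a b d) (h' : HasWeights u' v' a' b' d') :
    HasWeights (Fin.append u u') (Fin.append v v') (a + a') (b + b') (d + d') := by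
  obtain ⟨hu, hv, huv⟩ := h
  obtain ⟨hu', hv', huv'⟩ := h'
  exact ⟨by rw [hamW_append, hu, hu'], by rw [hamW_append, hv, hv'],
    by rw [band_append, hamW_append, huv, huv']⟩

lemma comp_cast {m n a b d : ℕ} {u v : Fin m → Bool} (h : n = m) (huv : HasWeights u v a b d) :
    HasWeights (u ∘ Fin.cast h) (v ∘ Fin.cast h) a b d := by
  subst h
  exact huv

end HasWeights

lemma hasWeights_hamW {n : ℕ} (u v : Fin n → Bool) :
    HasWeights u v (hamW u) (hamW v) (hamW (band u v)) :=
  ⟨rfl, rfl, rfl⟩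

lemma hasWeights_true_true (n : ℕ) : HasWeights (fun _ : Fin n => true) (fun _ => true) n n n :=
  ⟨hamW_true n, hamW_true n, hamW_true n⟩

lemma hasWeights_false_right {n : ℕ} (u : Fin n → Bool) :
    HasWeights u (fun _ => false) (hamW u) 0 0 :=
  ⟨rfl, hamW_false n, by rw [band_false_right, hamW_false]⟩

lemma hasWeights_false_left {n : ℕ} (v : Fin n → Bool) :
    HasWeights (fun _ => false) v 0 (hamW v) 0 :=
  ⟨hamW_false n, rfl, hamW_false n⟩

lemma exists_hasWeights_const {n a b d : ℕ} (ha : d ≤ a) (hb : d ≤ b) (hn : a + b - d ≤ n) :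
    ∃ u v : Fin n → Bool, HasWeights u v a b d := by
  obtain ⟨hu, hv, huv⟩ := ((((hasWeights_true_true d).append
    (hasWeights_false_right fun _ : Fin (a - d) => true)).append
    (hasWeights_false_left fun _ : Fin (b - d) => true)).append
    (hasWeights_false_right fun _ : Fin (n - (a + b - d)) => false)).comp_cast
    (show n = d + (a - d) + (b - d) + (n - (a + b - d)) by omega)
  simp only [hamW_true, hamW_false] at hu hv
  exact ⟨_, _, by omega, by omega, huv⟩

def gadgetLeft {c : ℕ} (x : Fin c → Bool) : Fin (c + c + c) → Bool :=
  Fin.append (Fin.append x fun i => !x i) fun _ => false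

def gadgetRight {c : ℕ} (y : Fin c → Bool) : Fin (c + c + c) → Bool :=
  Fin.append (Fin.append y fun _ => false) fun i => !y i

lemma hasWeights_gadget {c : ℕ} (x y : Fin c → Bool) :
    HasWeights (gadgetLeft x) (gadgetRight y) c c (hamW (band x y)) := by
  unfold gadgetLeft gadgetRight
  obtain ⟨hu, hv, huv⟩ := ((hasWeights_hamW x y).append
    (hasWeights_false_right fun i => !x i)).append (hasWeights_false_left fun i => !y i)
  rw [hamW_not] at hu hv
  have := hamW_le x
  have := hamW_le y
  exact ⟨by omega, by omega, huv⟩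

/-- The embedding used in the reduction: given `k + c ≤ r`, `k + c ≤ t` and
`r + t − k ≤ n − c`, there are maps `φ, ψ : {0,1}^c → {0,1}^n` such that
`|φ(x)| = r`, `|ψ(y)| = t` and `|φ(x) ∧ ψ(y)| = k + |x ∧ y|` for all `x, y`. -/
theorem exists_weight_embedding (n c r t k : ℕ)
    (h1 : k + c ≤ r) (h2 : k + c ≤ t) (h3 : r + t - k ≤ n - c) :
    ∃ φ ψ : (Fin c → Bool) → (Fin n → Bool),
      ∀ x y : Fin c → Bool,
        hamW (φ x) = r ∧ hamW (ψ y) = t ∧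
        hamW (band (φ x) (ψ y)) = k + hamW (band x y) := by
  obtain ⟨u, v, huv⟩ := exists_hasWeights_const (n := n - 3 * c) (a := r - c) (b := t - c)
    (d := k) (by omega) (by omega) (by omega)
  have hn : n = c + c + c + (n - 3 * c) := by omega
  refine ⟨fun x => Fin.append (gadgetLeft x) u ∘ Fin.cast hn,
    fun y => Fin.append (gadgetRight y) v ∘ Fin.cast hn, fun x y => ?_⟩
  dsimp only
  obtain ⟨hφ, hψ, hφψ⟩ := ((hasWeights_gadget x y).append huv).comp_cast hn
  exact ⟨by omega, by omega, by omega⟩
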